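/- Any two closed, equally-typed PCF_dp programs that both diverge are contextually congruent. -/

import Mathlib

/-!  A formalization of the meta-programming language PCF_dp (Davies–Pfenning style
quasi-quotation over call-by-value PCF), with small-step reduction, typing with a
modal context, contexts, contextual (pre)congruence, models, and a shallow
semantics for the program logic's formulae and judgements. -/

namespace PCFdp

/-- Types of PCF_dp: base types, functions, and code types `⟨α⟩`. -/
inductive Ty : Type
  | unit | bool | int
  | arrow (a b : Ty)
  | code (a : Ty)
deriving DecidableEq

/-- Terms of PCF_dp. `quote M` is the quasi-quote `⟨M⟩`, and
`letq x M N` is `let ⟨x⟩ = M in N`. `fix g x α β M` is `μg.λx^α.M`. -/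
inductive Tm : Type
  | var (x : ℕ)
  | cunit
  | cbool (b : Bool)
  | cint (n : ℤ)
  | lam (x : ℕ) (α : Ty) (M : Tm)
  | fix (g x : ℕ) (α β : Ty) (M : Tm)
  | app (M N : Tm)
  | add (M N : Tm)
  | ifte (M N N' : Tm)
  | quote (M : Tm)
  | letq (x : ℕ) (M N : Tm)
deriving DecidableEq

/-- Values: constants, abstractions, recursive abstractions, and all quasi-quotes. -/
inductive IsValue : Tm → Prop
  | cunit : IsValue .cunit
  | cbool (b) : IsValue (.cbool b)
  | cint (n) : IsValue (.cint n)
  | lam (x α M) : IsValue (.lam x α M)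
  | fix (g x α β M) : IsValue (.fix g x α β M)
  | quote (M) : IsValue (.quote M)

/-- Substitution `M[N/x]` (substituted terms are closed in all uses below). -/
def subst (x : ℕ) (N : Tm) : Tm → Tm
  | .var y => if y = x then N else .var y
  | .cunit => .cunit
  | .cbool b => .cbool b
  | .cint n => .cint n
  | .lam y α M => if y = x then .lam y α M else .lam y α (subst x N M)
  | .fix g y α β M => if g = x ∨ y = x then .fix g y α β M else .fix g y α β (subst x N M)
  | .app M M' => .app (subst x N M) (subst x N M')
  | .add M M' => .add (subst x N M) (subst x N M')
  | .ifte M M₁ M₂ => .ifte (subst x N M) (subst x N M₁) (subst x N M₂)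
  | .quote M => .quote (subst x N M)
  | .letq y M M' => .letq y (subst x N M) (if y = x then M' else subst x N M')

/-- Call-by-value small-step reduction, with the redexes of PCF plus
`let ⟨x⟩ = ⟨M⟩ in N → N[M/x]`, closed under evaluation contexts. -/
inductive Step : Tm → Tm → Prop
  | beta {x α M V} : IsValue V → Step (.app (.lam x α M) V) (subst x V M)
  | betaFix {g x α β M V} : IsValue V →
      Step (.app (.fix g x α β M) V) (subst x V (subst g (.fix g x α β M) M))
  | iteT {N N'} : Step (.ifte (.cbool true) N N') N
  | iteF {N N'} : Step (.ifte (.cbool false) N N') N'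
  | addC {m n} : Step (.add (.cint m) (.cint n)) (.cint (m + n))
  | letqQ {x M N} : Step (.letq x (.quote M) N) (subst x M N)
  | appL {M M' N} : Step M M' → Step (.app M N) (.app M' N)
  | appR {V N N'} : IsValue V → Step N N' → Step (.app V N) (.app V N')
  | addL {M M' N} : Step M M' → Step (.add M N) (.add M' N)
  | addR {V N N'} : IsValue V → Step N N' → Step (.add V N) (.add V N')
  | ifteC {M M' N N'} : Step M M' → Step (.ifte M N N') (.ifte M' N N')
  | letqL {x M M' N} : Step M M' → Step (.letq x M N) (.letq x M' N)

/-- Many-step reduction `→*`. -/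
def Steps : Tm → Tm → Prop := Relation.ReflTransGen Step

/-- `M ⇓ V`: evaluation to a value. -/
def Evals (M V : Tm) : Prop := Steps M V ∧ IsValue V

/-- `M ⇓`: convergence. -/
def Conv (M : Tm) : Prop := ∃ V, Evals M V

/-- `M ⇑`: divergence. -/
def Div (M : Tm) : Prop := ¬ Conv M

/-- Typing environments: partial maps from variables to types. -/
def Env : Type := ℕ → Option Ty
def Env.empty : Env := fun _ => none
def Env.update (Γ : Env) (x : ℕ) (α : Ty) : Env := fun y => if y = x then some α else Γ y

/-- The typing judgement `Γ; Δ ⊢ M : α` with non-modal context `Γ` and modal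
context `Δ`.  Free variables of quasi-quoted code must be modal; unquote binds
a modal variable. -/
inductive Types : Env → Env → Tm → Ty → Prop
  | varN {Γ Δ : Env} {x α} : Γ x = some α → Types Γ Δ (.var x) α
  | varM {Γ Δ : Env} {x α} : Δ x = some α → Types Γ Δ (.var x) α
  | cunit {Γ Δ} : Types Γ Δ .cunit .unit
  | cbool {Γ Δ b} : Types Γ Δ (.cbool b) .bool
  | cint {Γ Δ n} : Types Γ Δ (.cint n) .int
  | lam {Γ Δ x α β M} : Types (Env.update Γ x α) Δ M β → Types Γ Δ (.lam x α M) (.arrow α β)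
  | fix {Γ Δ g x α β M} :
      Types (Env.update (Env.update Γ g (.arrow α β)) x α) Δ M β →
      Types Γ Δ (.fix g x α β M) (.arrow α β)
  | app {Γ Δ M N α β} : Types Γ Δ M (.arrow α β) → Types Γ Δ N α → Types Γ Δ (.app M N) β
  | add {Γ Δ M N} : Types Γ Δ M .int → Types Γ Δ N .int → Types Γ Δ (.add M N) .int
  | ifte {Γ Δ M N N' α} : Types Γ Δ M .bool → Types Γ Δ N α → Types Γ Δ N' α →
      Types Γ Δ (.ifte M N N') α
  | quote {Γ Δ M α} : Types Env.empty Δ M α → Types Γ Δ (.quote M) (.code α)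
  | letq {Γ Δ x M N α β} : Types Γ Δ M (.code α) → Types Γ (Env.update Δ x α) N β →
      Types Γ Δ (.letq x M N) β

/-- `M` is a closed program of type `α`. -/
def Closed (M : Tm) (α : Ty) : Prop := Types Env.empty Env.empty M α

/-- Term contexts (terms with one hole). -/
inductive Ctx : Type
  | hole
  | lamC (x : ℕ) (α : Ty) (C : Ctx)
  | fixC (g x : ℕ) (α β : Ty) (C : Ctx)
  | appL (C : Ctx) (N : Tm)
  | appR (M : Tm) (C : Ctx)
  | addL (C : Ctx) (N : Tm)
  | addR (M : Tm) (C : Ctx)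
  | ifteC (C : Ctx) (N N' : Tm)
  | ifteL (M : Tm) (C : Ctx) (N' : Tm)
  | ifteR (M N : Tm) (C : Ctx)
  | quoteC (C : Ctx)
  | letqL (x : ℕ) (C : Ctx) (N : Tm)
  | letqR (x : ℕ) (M : Tm) (C : Ctx)

/-- Plugging a term into a context. -/
def Ctx.plug : Ctx → Tm → Tm
  | .hole, M => M
  | .lamC x α C, M => .lam x α (C.plug M)
  | .fixC g x α β C, M => .fix g x α β (C.plug M)
  | .appL C N, M => .app (C.plug M) N
  | .appR L C, M => .app L (C.plug M)
  | .addL C N, M => .add (C.plug M) N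
  | .addR L C, M => .add L (C.plug M)
  | .ifteC C N N', M => .ifte (C.plug M) N N'
  | .ifteL L C N', M => .ifte L (C.plug M) N'
  | .ifteR L N C, M => .ifte L N (C.plug M)
  | .quoteC C, M => .quote (C.plug M)
  | .letqL x C N, M => .letq x (C.plug M) N
  | .letqR x L C, M => .letq x L (C.plug M)

/-- Contextual precongruence `M ≲ N`: for every closing context `C` of type
`Unit` (for both terms), convergence of `C[M]` implies convergence of `C[N]`. -/
def Prec (M N : Tm) : Prop :=
  ∀ C : Ctx, Closed (C.plug M) .unit → Closed (C.plug N) .unit →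
    Conv (C.plug M) → Conv (C.plug N)

/-- Contextual congruence `M ≃ N`, i.e. `≲ ∩ ≲⁻¹`. -/
def Cong (M N : Tm) : Prop := Prec M N ∧ Prec N M

/-- Partial substitutions (used as the two components of a model). -/
def Sub : Type := ℕ → Option Tm
def Sub.remove (ρ : Sub) (x : ℕ) : Sub := fun y => if y = x then none else ρ y
def Sub.update (ρ : Sub) (x : ℕ) (M : Tm) : Sub := fun y => if y = x then some M else ρ y

/-- Simultaneous substitution of (closed) terms for free variables. -/
def msubst (ρ : Sub) : Tm → Tm
  | .var x => (ρ x).getD (.var x)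
  | .cunit => .cunit
  | .cbool b => .cbool b
  | .cint n => .cint n
  | .lam x α M => .lam x α (msubst (ρ.remove x) M)
  | .fix g x α β M => .fix g x α β (msubst ((ρ.remove g).remove x) M)
  | .app M N => .app (msubst ρ M) (msubst ρ N)
  | .add M N => .add (msubst ρ M) (msubst ρ N)
  | .ifte M N N' => .ifte (msubst ρ M) (msubst ρ N) (msubst ρ N')
  | .quote M => .quote (msubst ρ M)
  | .letq x M N => .letq x (msubst ρ M) (msubst (ρ.remove x) N)

/-- A model of type `Γ; Δ`: `ξ` maps the non-modal variables to closed values of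
the right types, `σ` maps the modal variables to closed (possibly diverging)
programs of the right types. -/
structure Model (Γ Δ : Env) : Type where
  ξ : Sub
  σ : Sub
  ξ_dom : ∀ x, (Γ x).isSome ↔ (ξ x).isSome
  ξ_typed : ∀ x α V, Γ x = some α → ξ x = some V → IsValue V ∧ Closed V α
  σ_dom : ∀ x, (Δ x).isSome ↔ (σ x).isSome
  σ_typed : ∀ x α M, Δ x = some α → σ x = some M → Closed M α

/-- The combined substitution `ξ ∪ σ` of a model. -/
def Model.sub {Γ Δ : Env} (η : Model Γ Δ) : Sub :=
  fun x => match η.ξ x with | some V => some V | none => η.σ x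

/-- The closure `Mη` of a term by a model. -/
def Model.close {Γ Δ : Env} (η : Model Γ Δ) (M : Tm) : Tm := msubst η.sub M

/-- Denotation of a variable in a model given as a pair of substitutions. -/
def lookup (ξ σ : Sub) (u : ℕ) : Option Tm :=
  match ξ u with | some V => some V | none => σ u

/-- Formulae of the logic, represented semantically by their satisfaction
predicate on models `(ξ, σ)`. -/
def Form : Type := Sub → Sub → Prop

/-- Semantics of the code-evaluation predicate `⟨u⟩↘m.A`: the denotation of `u`
evaluates to a quasi-quote `⟨M⟩`, `M ⇓ V`, and `A` holds with the modal anchor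
`m` bound to `V`. -/
def CodeEval (u m : ℕ) (A : Form) : Form := fun ξ σ =>
  ∃ U M V, lookup ξ σ u = some U ∧ Evals U (.quote M) ∧ Evals M V ∧ A ξ (σ.update m V)

/-- Validity of the total-correctness judgement `{A} M :_u {B}`
(anchor `u` non-modal). -/
def Valid (Γ Δ : Env) (A : Form) (M : Tm) (u : ℕ) (B : Form) : Prop :=
  ∀ η : Model Γ Δ, A η.ξ η.σ →
    ∃ V, Evals (η.close M) V ∧ B (η.ξ.update u V) η.σ

/-- Validity of a total-correctness judgement whose anchor is placed modally. -/
def ValidM (Γ Δ : Env) (A : Form) (M : Tm) (m : ℕ) (B : Form) : Prop :=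
  ∀ η : Model Γ Δ, A η.ξ η.σ →
    ∃ V, Evals (η.close M) V ∧ B η.ξ (η.σ.update m V)

/-!
Let `Compat B` be the compatible closure of the relation `B` pairing closed divergent terms.
It is a simulation: every step of the left term is matched by steps of the right one. If the
left term is itself one side of a `B`-pair, its reduct is again closed and divergent, so stays
paired with the same right term. Otherwise the step contracts a redex whose head is a value,
hence not divergent, so the right term has a redex of the same shape; the contracta are related
because substitution respects `Compat B`, closed terms being unaffected by it. Since `C[M₁]` and
`C[M₂]` are related for every context `C`, convergence transfers from one to the other.
-/

def fv : Tm → Finset ℕ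
  | .var x => {x}
  | .cunit => ∅
  | .cbool _ => ∅
  | .cint _ => ∅
  | .lam x _ M => fv M \ {x}
  | .fix g x _ _ M => fv M \ {g, x}
  | .app M N => fv M ∪ fv N
  | .add M N => fv M ∪ fv N
  | .ifte M N N' => fv M ∪ fv N ∪ fv N'
  | .quote M => fv M
  | .letq x M N => fv M ∪ (fv N \ {x})

theorem subst_of_notMem_fv {x : ℕ} {N M : Tm} (h : x ∉ fv M) : subst x N M = M := by
  induction M <;> grind [subst, fv]

theorem fv_subst_subset (x : ℕ) (N M : Tm) : fv (subst x N M) ⊆ fv M \ {x} ∪ fv N := by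
  intro z hz
  induction M <;> grind [subst, fv]

theorem Step.fv_subset {M M' : Tm} (h : Step M M') : fv M' ⊆ fv M := by
  induction h with
  | @betaFix g x α β M V _ =>
    intro z hz
    have hx := fv_subst_subset x V _ hz
    have hg := fv_subst_subset g (.fix g x α β M) M
    simp only [fv, Finset.subset_iff, Finset.mem_union, Finset.mem_sdiff, Finset.mem_insert,
      Finset.mem_singleton] at *
    grind
  | beta | letqQ => intro z hz; have := fv_subst_subset _ _ _ hz; grind [fv]
  | _ => grind [fv]

theorem Types.fv_subset {Γ Δ : Env} {M : Tm} {α : Ty} (h : Types Γ Δ M α) :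
    ∀ x ∈ fv M, (Γ x).isSome ∨ (Δ x).isSome := by
  induction h <;> grind [fv, Env.update, Env.empty]

theorem Closed.fv_eq_empty {M : Tm} {α : Ty} (h : Closed M α) : fv M = ∅ :=
  Finset.eq_empty_of_forall_notMem fun x hx => by simpa [Env.empty] using h.fv_subset x hx

theorem Div.not_isValue {M : Tm} (hd : Div M) : ¬ IsValue M :=
  fun hv => hd ⟨M, .refl, hv⟩

theorem Div.of_step {M M' : Tm} (hd : Div M) (hs : Step M M') : Div M' :=
  fun ⟨V, hV, hv⟩ => hd ⟨V, .head hs hV, hv⟩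

theorem Steps.map (f : Tm → Tm) (hf : ∀ {M M'}, Step M M' → Step (f M) (f M')) {M M' : Tm}
    (h : Steps M M') : Steps (f M) (f M') :=
  Relation.ReflTransGen.lift f (fun _ _ => hf) _ _ h

inductive Compat (B : Tm → Tm → Prop) : Tm → Tm → Prop
  | base {M N} : B M N → Compat B M N
  | var (x) : Compat B (.var x) (.var x)
  | cunit : Compat B .cunit .cunit
  | cbool (b) : Compat B (.cbool b) (.cbool b)
  | cint (n) : Compat B (.cint n) (.cint n)
  | lam {M M'} (x α) : Compat B M M' → Compat B (.lam x α M) (.lam x α M')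
  | fix {M M'} (g x α β) : Compat B M M' → Compat B (.fix g x α β M) (.fix g x α β M')
  | app {M M' N N'} : Compat B M M' → Compat B N N' → Compat B (.app M N) (.app M' N')
  | add {M M' N N'} : Compat B M M' → Compat B N N' → Compat B (.add M N) (.add M' N')
  | ifte {M M' N N' P P'} : Compat B M M' → Compat B N N' → Compat B P P' →
      Compat B (.ifte M N P) (.ifte M' N' P')
  | quote {M M'} : Compat B M M' → Compat B (.quote M) (.quote M')
  | letq {M M' N N'} (x) : Compat B M M' → Compat B N N' →
      Compat B (.letq x M N) (.letq x M' N')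

namespace Compat

variable {B : Tm → Tm → Prop}

theorem refl (M : Tm) : Compat B M M := by
  induction M with
  | var x => exact .var x
  | cunit => exact .cunit
  | cbool b => exact .cbool b
  | cint n => exact .cint n
  | lam x α _ ih => exact .lam x α ih
  | fix g x α β _ ih => exact .fix g x α β ih
  | app _ _ ih ih' => exact .app ih ih'
  | add _ _ ih ih' => exact .add ih ih'
  | ifte _ _ _ ih ih₁ ih₂ => exact .ifte ih ih₁ ih₂
  | quote _ ih => exact .quote ih
  | letq x _ _ ih ih' => exact .letq x ih ih'

theorem plug {M N : Tm} (h : Compat B M N) (C : Ctx) : Compat B (C.plug M) (C.plug N) := by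
  induction C with
  | hole => exact h
  | lamC x α C ih => exact .lam x α ih
  | fixC g x α β C ih => exact .fix g x α β ih
  | appL C N ih => exact .app ih (.refl N)
  | appR M C ih => exact .app (.refl M) ih
  | addL C N ih => exact .add ih (.refl N)
  | addR M C ih => exact .add (.refl M) ih
  | ifteC C N N' ih => exact .ifte ih (.refl N) (.refl N')
  | ifteL M C N' ih => exact .ifte (.refl M) ih (.refl N')
  | ifteR M N C ih => exact .ifte (.refl M) (.refl N) ih
  | quoteC C ih => exact .quote ih
  | letqL x C N ih => exact .letq x ih (.refl N)
  | letqR x M C ih => exact .letq x (.refl M) ih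

theorem isValue (not_isValue : ∀ {M N}, B M N → ¬ IsValue M) {M N : Tm} (h : Compat B M N)
    (hM : IsValue M) : IsValue N := by
  cases h with
  | base hb => exact absurd hM (not_isValue hb)
  | _ => cases hM <;> constructor

theorem subst (closed : ∀ {M N}, B M N → fv M = ∅ ∧ fv N = ∅) {M M' : Tm} (h : Compat B M M')
    {V V' : Tm} (x : ℕ) (hV : Compat B V V') : Compat B (subst x V M) (subst x V' M') := by
  induction h with
  | base h =>
    rw [subst_of_notMem_fv (by simp [(closed h).1]), subst_of_notMem_fv (by simp [(closed h).2])]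
    exact .base h
  | var y => unfold PCFdp.subst; split_ifs <;> first | exact hV | exact .var y
  | lam y α h ih => unfold PCFdp.subst; split_ifs <;> first | exact h.lam .. | exact ih.lam ..
  | fix g y α β h ih => unfold PCFdp.subst; split_ifs <;> first | exact h.fix .. | exact ih.fix ..
  | letq y _ hP ih ih' =>
    unfold PCFdp.subst; split_ifs <;> first | exact ih.letq y hP | exact ih.letq y ih'
  | cunit => exact .cunit
  | cbool b => exact .cbool b
  | cint n => exact .cint n
  | app _ _ ih ih' => exact .app ih ih'
  | add _ _ ih ih' => exact .add ih ih'
  | ifte _ _ _ ih ih₁ ih₂ => exact .ifte ih ih₁ ih₂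
  | quote _ ih => exact .quote ih

theorem exists_steps_of_step (closed : ∀ {M N}, B M N → fv M = ∅ ∧ fv N = ∅)
    (not_isValue : ∀ {M N}, B M N → ¬ IsValue M) (step : ∀ {M M' N}, B M N → Step M M' → B M' N)
    {M M' N : Tm} (hs : Step M M') (h : Compat B M N) : ∃ N', Steps N N' ∧ Compat B M' N' := by
  -- the copy `hs₀` survives the induction, for the `base` cases where `step` absorbs the step
  have hs₀ := hs
  induction hs generalizing N <;> cases h
  all_goals try exact ⟨_, .refl, .base (step ‹B _ _› hs₀)⟩
  case beta.app hV _ _ hf ha =>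
    cases hf with
    | base hb => exact absurd (.lam ..) (not_isValue hb)
    | lam _ _ hM => exact ⟨_, .single (.beta (ha.isValue not_isValue hV)), hM.subst closed _ ha⟩
  case betaFix.app hV _ _ hf ha =>
    cases hf with
    | base hb => exact absurd (.fix ..) (not_isValue hb)
    | fix _ _ _ _ hM =>
      exact ⟨_, .single (.betaFix (ha.isValue not_isValue hV)),
        (hM.subst closed _ (.fix _ _ _ _ hM)).subst closed _ ha⟩
  case iteT.ifte hc hN _ | iteF.ifte hc _ hN =>
    cases hc with
    | base hb => exact absurd (.cbool _) (not_isValue hb)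
    | cbool => exact ⟨_, .single (by constructor), hN⟩
  case addC.add hm hn =>
    cases hm with
    | base hb => exact absurd (.cint _) (not_isValue hb)
    | cint =>
      cases hn with
      | base hb => exact absurd (.cint _) (not_isValue hb)
      | cint => exact ⟨_, .single .addC, .cint _⟩
  case letqQ.letq hq hN =>
    cases hq with
    | base hb => exact absurd (.quote _) (not_isValue hb)
    | quote hM => exact ⟨_, .single .letqQ, hN.subst closed _ hM⟩
  case appL.app hs ih _ _ hf ha =>
    obtain ⟨P, hP, hPR⟩ := ih hf hs
    exact ⟨_, hP.map (Tm.app · _) .appL, hPR.app ha⟩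
  case appR.app hV hs ih _ _ hf ha =>
    obtain ⟨P, hP, hPR⟩ := ih ha hs
    exact ⟨_, hP.map (Tm.app _) (.appR (hf.isValue not_isValue hV)), hf.app hPR⟩
  case addL.add hs ih _ _ hm hn =>
    obtain ⟨P, hP, hPR⟩ := ih hm hs
    exact ⟨_, hP.map (Tm.add · _) .addL, hPR.add hn⟩
  case addR.add hV hs ih _ _ hm hn =>
    obtain ⟨P, hP, hPR⟩ := ih hn hs
    exact ⟨_, hP.map (Tm.add _) (.addR (hm.isValue not_isValue hV)), hm.add hPR⟩
  case ifteC.ifte hs ih _ _ _ hc hN hN' =>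
    obtain ⟨P, hP, hPR⟩ := ih hc hs
    exact ⟨_, hP.map (Tm.ifte · _ _) .ifteC, hPR.ifte hN hN'⟩
  case letqL.letq hs ih _ _ hM hN =>
    obtain ⟨P, hP, hPR⟩ := ih hM hs
    exact ⟨_, hP.map (Tm.letq _ · _) .letqL, hPR.letq _ hN⟩

theorem conv (closed : ∀ {M N}, B M N → fv M = ∅ ∧ fv N = ∅)
    (not_isValue : ∀ {M N}, B M N → ¬ IsValue M) (step : ∀ {M M' N}, B M N → Step M M' → B M' N)
    {M N : Tm} (h : Compat B M N) (hM : Conv M) : Conv N := by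
  obtain ⟨V, hMV, hV⟩ := hM
  induction hMV using Relation.ReflTransGen.head_induction_on generalizing N with
  | refl => exact ⟨N, .refl, h.isValue not_isValue hV⟩
  | head hs _ ih =>
    obtain ⟨P, hNP, hP⟩ := h.exists_steps_of_step closed not_isValue step hs
    obtain ⟨W, hPW, hW⟩ := ih hP
    exact ⟨W, hNP.trans hPW, hW⟩

end Compat

def ClosedDivPair (M N : Tm) : Prop := fv M = ∅ ∧ fv N = ∅ ∧ Div M ∧ Div N

namespace ClosedDivPair

theorem symm {M N : Tm} (h : ClosedDivPair M N) : ClosedDivPair N M :=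
  ⟨h.2.1, h.1, h.2.2.2, h.2.2.1⟩

theorem of_step {M M' N : Tm} (h : ClosedDivPair M N) (hs : Step M M') : ClosedDivPair M' N :=
  ⟨Finset.subset_empty.mp (h.1 ▸ hs.fv_subset), h.2.1, h.2.2.1.of_step hs, h.2.2.2⟩

theorem prec {M N : Tm} (h : ClosedDivPair M N) : Prec M N := fun C _ _ =>
  ((Compat.base h).plug C).conv (fun h : ClosedDivPair _ _ => ⟨h.1, h.2.1⟩)
    (fun h => h.2.2.1.not_isValue) of_step

end ClosedDivPair

/-- any two closed, equally-typed diverging programs are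
contextually congruent. -/
theorem diverging_closed_cong (M₁ M₂ : Tm) (α : Ty)
    (h₁ : Closed M₁ α) (h₂ : Closed M₂ α)
    (d₁ : Div M₁) (d₂ : Div M₂) :
    Cong M₁ M₂ := by
  have h : ClosedDivPair M₁ M₂ := ⟨h₁.fv_eq_empty, h₂.fv_eq_empty, d₁, d₂⟩
  exact ⟨h.prec, h.symm.prec⟩

end PCFdp
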